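/- arXiv:2412.12992 — 8 statements merged into one kernel-verified Lean document; each statement's English description precedes it below -/
import Mathlib

section
/- The feasible region of the SFLA approximation is a subset of the exact feasible region: X_SFLA(κ) ⊆ X_Exact. That is, if there exist s ≥ 0 and r ∈ R^N with r ≥ 0 satisfying εNs - Σ_i r_i ≥ θN, κ_i·(b_p^T ξ_i + d_p - a_p^T x)/‖b_p‖_* ≥ s - r_i for all i ∈ [N]_p and p ∈ [P], and (q_p + d_p - a_p^T x)/‖b_p‖_* ≥ s for all p ∈ [P], then the same (s, r) satisfies the strengthened exact constraints where the κ_i factor is replaced by the positive-part operator: ((b_p^T ξ_i + d_p - a_p^T x)/‖b_p‖_*)^+ ≥ s - r_i for all i ∈ [N]_p, p ∈ [P]. -/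
/-- Dot product on `ℝ^n`. -/
def dotp {n : ℕ} (u v : Fin n → ℝ) : ℝ := ∑ j, u j * v j

/-- `kthSmallest t j` is the `(j+1)`-th smallest entry of the tuple `t`. -/
noncomputable def kthSmallest {N : ℕ} (t : Fin N → ℝ) (j : Fin N) : ℝ := t (Tuple.sort t j)

/-- `X_SFLA(κ) ⊆ X_Exact`.  If `(s, r)` satisfies the SFLA
constraints (with scaling factors `κ_i ∈ [0,1]` on the indices `i ∈ [N]_p`,
plus the valid inequalities), then the same `(s, r)` satisfies the strengthened
exact constraints where the factor `κ_i` is replaced by the positive part. -/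
theorem stmt2 {K L N P : ℕ} (hN : 1 ≤ N) (hP : 1 ≤ P)
    (ε θ : ℝ) (hε0 : 0 < ε) (hε1 : ε < 1) (hθ : 0 < θ)
    (ξ : Fin N → Fin K → ℝ) (x : Fin L → ℝ)
    (a : Fin P → Fin L → ℝ) (b : Fin P → Fin K → ℝ) (d : Fin P → ℝ)
    (hb : ∀ p, b p ≠ 0)
    (nb : Fin P → ℝ) (hnb : ∀ p, 0 < nb p)  -- `nb p` stands for `‖b_p‖_*`
    (κ : Fin N → ℝ) (hκ0 : ∀ i, 0 ≤ κ i) (hκ1 : ∀ i, κ i ≤ 1)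
    (k : ℕ) (hk : k = ⌊ε * N⌋₊) (hkN : k < N)
    (q : Fin P → ℝ)
    (hq : ∀ p, q p = kthSmallest (fun i => dotp (b p) (ξ i)) ⟨k, hkN⟩)
    (s : ℝ) (r : Fin N → ℝ)
    (hs : 0 ≤ s) (hr : ∀ i, 0 ≤ r i)
    (hsum : ε * N * s - ∑ i, r i ≥ θ * N)
    (hSFLA : ∀ p, ∀ i, dotp (b p) (ξ i) < q p →
        κ i * ((dotp (b p) (ξ i) + d p - dotp (a p) x) / nb p) ≥ s - r i)
    (hvalid : ∀ p, (q p + d p - dotp (a p) x) / nb p ≥ s) :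
    ∀ p, ∀ i, dotp (b p) (ξ i) < q p →
      max ((dotp (b p) (ξ i) + d p - dotp (a p) x) / nb p) 0 ≥ s - r i := by
  intro p i hlt
  refine le_trans (le_trans ?_ (hSFLA p i hlt)) ?_
  · exact le_refl _
  set t := (dotp (b p) (ξ i) + d p - dotp (a p) x) / nb p
  rcases le_or_gt 0 t with h | h
  · calc κ i * t ≤ 1 * t := mul_le_mul_of_nonneg_right (hκ1 i) h
      _ = t := one_mul t
      _ ≤ max t 0 := le_max_left _ _
  · calc κ i * t ≤ 0 := mul_nonpos_of_nonneg_of_nonpos (hκ0 i) h.le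
      _ ≤ max t 0 := le_max_right _ _
end

section
/- The constraint set defining the LA approximation admits a CVaR characterization: x belongs to X_LA(κ) (i.e., there exist s ≥ 0, r ≥ 0 with εNs - Σ_i r_i ≥ θN and d̂_i(x) ≥ s - r_i for all i ∈ [N]) if and only if θ/ε + CVaR_{1-ε}(-d̂(x)) ≤ 0, where CVaR_{1-ε}(-d̂(x)) = min_{s'} [s' + (1/(εN)) Σ_i max(0, -d̂_i(x) - s')] and d̂_i(x) denotes the approximate distance κ_i · min_p (b_p^T ξ_i + d_p - a_p^T x)/‖b_p‖_*. -/
set_option maxHeartbeats 1000000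

/-- CVaR characterization of the LA feasible set.  There exist
`s ≥ 0`, `r ≥ 0` with `εNs - Σ_i r_i ≥ θN` and `d̂_i ≥ s - r_i` for all `i`
iff `θ/ε + CVaR_{1-ε}(-d̂) ≤ 0`, where
`CVaR_{1-ε}(-d̂) = inf_{s'} [s' + (1/(εN)) Σ_i max(0, -d̂_i - s')]`. -/
theorem stmt5 {N : ℕ} (hN : 1 ≤ N) (ε θ : ℝ) (hε0 : 0 < ε) (hε1 : ε < 1) (hθ : 0 < θ)
    (dhat : Fin N → ℝ) :
    (∃ (s : ℝ) (r : Fin N → ℝ), 0 ≤ s ∧ (∀ i, 0 ≤ r i) ∧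
        ε * N * s - ∑ i, r i ≥ θ * N ∧ ∀ i, dhat i ≥ s - r i) ↔
      θ / ε + (⨅ s' : ℝ, s' + (1 / (ε * N)) * ∑ i, max 0 (-dhat i - s')) ≤ 0 := by
  have hN0 : (0:ℝ) < N := by exact_mod_cast hN
  have hεne : ε ≠ 0 := ne_of_gt hε0
  set c : ℝ := 1 / (ε * N) with hc_def
  have hc : 0 < c := by positivity
  have hcN : c * (N:ℝ) = 1/ε := by rw [hc_def]; (field_simp)
  have hcεN : c * (ε * N) = 1 := by
    rw [hc_def, one_div, inv_mul_cancel₀ (by positivity)]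
  clear_value c
  set f : ℝ → ℝ := fun s' => s' + c * ∑ i, max 0 (-dhat i - s') with hf_def
  set C : ℝ := c * ∑ i, -dhat i with hC_def
  have hsum : ∀ s' : ℝ, ∑ i, (-dhat i - s') = (∑ i : Fin N, -dhat i) - (N:ℝ) * s' := by
    intro s'
    rw [Finset.sum_sub_distrib, Finset.sum_const, Finset.card_univ, Fintype.card_fin,
      nsmul_eq_mul]
  have hfval : ∀ s', f s' = s' + c * ∑ i, max 0 (-dhat i - s') := fun s' => by
    rw [hf_def]
  have hfs : ∀ s', s' ≤ f s' := by
    intro s'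
    have h1 : (0:ℝ) ≤ ∑ i, max 0 (-dhat i - s') :=
      Finset.sum_nonneg fun i _ => le_max_left _ _
    have := mul_nonneg hc.le h1
    rw [hfval]; linarith
  have hgrow : ∀ s', s' + C - s' / ε ≤ f s' := by
    intro s'
    have h1 : ∑ i, (-dhat i - s') ≤ ∑ i, max 0 (-dhat i - s') :=
      Finset.sum_le_sum fun i _ => le_max_right _ _
    have h2 : c * ∑ i, (-dhat i - s') ≤ c * ∑ i, max 0 (-dhat i - s') :=
      mul_le_mul_of_nonneg_left h1 hc.le
    rw [hsum s', mul_sub] at h2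
    have h3 : c * ((N:ℝ) * s') = s' / ε := by
      rw [← mul_assoc, hcN]; ring
    rw [h3] at h2
    rw [hfval, hC_def]
    linarith
  have hM : f 0 = c * ∑ i, max 0 (-dhat i) := by
    rw [hfval]; simp
  clear_value f C
  have hlb : ∀ s', ε * C ≤ f s' := by
    intro s'
    rcases le_or_gt s' (ε * C) with h | h
    · have h1 := hgrow s'
      have key : ε * C ≤ s' + C - s' / ε := by
        have h4 : s' / ε * ε = s' := div_mul_cancel₀ _ hεne
        nlinarith [mul_le_mul_of_nonneg_right h (le_of_lt hε0)]
      exact key.trans h1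
    · exact (le_of_lt h).trans (hfs s')
  have hbdd : BddBelow (Set.range f) := ⟨ε * C, by rintro _ ⟨s', rfl⟩; exact hlb s'⟩
  constructor
  · rintro ⟨s, r, hs, hr, hbudget, hfeas⟩
    have h1 : ⨅ s' : ℝ, f s' ≤ f (-s) := ciInf_le hbdd (-s)
    have h2 : f (-s) ≤ -(θ/ε) := by
      have hmax : ∀ i, max 0 (-dhat i - (-s)) ≤ r i := by
        intro i
        exact max_le (hr i) (by linarith [hfeas i])
      have hsumle : ∑ i, max 0 (-dhat i - (-s)) ≤ ∑ i, r i :=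
        Finset.sum_le_sum fun i _ => hmax i
      have h3 : ∑ i, r i ≤ ε * N * s - θ * N := by linarith [hbudget]
      have h4 : c * ∑ i, max 0 (-dhat i - (-s)) ≤ c * (ε * N * s - θ * N) :=
        mul_le_mul_of_nonneg_left (le_trans hsumle h3) hc.le
      have h5 : c * (ε * N * s - θ * N) = s - θ/ε := by
        linear_combination s * hcεN + (-θ) * hcN
      rw [h5] at h4
      rw [hfval]
      linarith
    linarith [h1.trans h2]
  · intro h
    set M : ℝ := f 0 with hM_def
    have hM0 : 0 ≤ M := by
      rw [hM]
      exact mul_nonneg hc.le (Finset.sum_nonneg fun i _ => le_max_left _ _)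
    have hCM : C ≤ M := by
      rw [hM, hC_def]
      exact mul_le_mul_of_nonneg_left
        (Finset.sum_le_sum fun i _ => le_max_right _ _) hc.le
    have hMf : f 0 = M := hM_def.symm
    clear_value M
    set a : ℝ := ε * (C - M) / (1 - ε) - 1 with ha_def
    set b : ℝ := M + 1 with hb_def
    have ha0 : a < 0 := by
      have h1 : ε * (C - M) ≤ 0 := mul_nonpos_of_nonneg_of_nonpos hε0.le (by linarith)
      have h2 : ε * (C - M) / (1 - ε) ≤ 0 := div_nonpos_of_nonpos_of_nonneg h1 (by linarith)
      rw [ha_def]; linarith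
    have hb0 : 0 < b := by rw [hb_def]; linarith
    have h1ε : (1:ℝ) - ε ≠ 0 := by linarith
    have haval : a * (1 - ε) = ε * (C - M) - (1 - ε) := by
      rw [ha_def, sub_mul, one_mul, div_mul_cancel₀ _ h1ε]
    clear_value a b
    have hab : a ≤ b := by linarith
    have hcont : Continuous f := by
      have : f = fun s' => s' + c * ∑ i, max 0 (-dhat i - s') := funext hfval
      rw [this]
      refine continuous_id.add (continuous_const.mul ?_)
      exact continuous_finset_sum _ fun i _ =>
        continuous_const.max (continuous_const.sub continuous_id)
    obtain ⟨x₀, hx₀mem, hx₀min⟩ :=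
      isCompact_Icc.exists_isMinOn (Set.nonempty_Icc.mpr hab) hcont.continuousOn
    have h0mem : (0:ℝ) ∈ Set.Icc a b := Set.mem_Icc.mpr ⟨ha0.le, hb0.le⟩
    have h6 : f x₀ ≤ M := hMf ▸ hx₀min h0mem
    have hglobal : ∀ s', f x₀ ≤ f s' := by
      intro s'
      rcases le_or_gt s' a with hcase | hcase
      · have h1 := hgrow s'
        have h2 : M < s' + C - s' / ε := by
          have hpos : (0:ℝ) < 1 - ε := by linarith
          have ht : s' / ε * ε = s' := div_mul_cancel₀ _ hεne
          have h4 : s' * (1 - ε) ≤ ε * (C - M) - (1 - ε) := by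
            have := mul_le_mul_of_nonneg_right hcase hpos.le
            rw [haval] at this
            exact this
          set t := s' / ε with htd
          nlinarith [h4, hpos, hε0, ht]
        exact h6.trans ((h2.trans_le h1).le)
      rcases le_or_gt s' b with hcase2 | hcase2
      · exact hx₀min (Set.mem_Icc.mpr ⟨hcase.le, hcase2⟩)
      · have h1 := hfs s'
        have : M ≤ f s' := by rw [hb_def] at hcase2; linarith
        exact h6.trans this
    have hle : f x₀ ≤ ⨅ s' : ℝ, f s' := le_ciInf hglobal
    have hx₀ : f x₀ ≤ -(θ/ε) := by linarith
    refine ⟨-x₀, fun i => max 0 (-dhat i - x₀), ?_, fun i => le_max_left _ _, ?_, ?_⟩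
    · have h1 : x₀ ≤ -(θ/ε) := (hfs x₀).trans hx₀
      have hθε : 0 < θ / ε := div_pos hθ hε0
      linarith
    · show ε * N * (-x₀) - ∑ i : Fin N, max 0 (-dhat i - x₀) ≥ θ * N
      set S : ℝ := ∑ i, max 0 (-dhat i - x₀) with hS_def
      have h1 : x₀ + c * S ≤ -(θ/ε) := by rw [hfval] at hx₀; exact hx₀
      have h2 : ε * (N:ℝ) * (x₀ + c * S) ≤ ε * (N:ℝ) * (-(θ/ε)) :=
        mul_le_mul_of_nonneg_left h1 (by positivity)
      have h3 : ε * (N:ℝ) * (x₀ + c * S) = ε * (N:ℝ) * x₀ + S := by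
        linear_combination S * hcεN
      have h4 : ε * (N:ℝ) * (-(θ/ε)) = -(θ * N) := by
        rw [div_eq_mul_inv]
        linear_combination (-(θ * (N:ℝ))) * (mul_inv_cancel₀ hεne)
      rw [h3, h4] at h2
      linarith
    · intro i
      have := le_max_right (0:ℝ) (-dhat i - x₀)
      show dhat i ≥ -x₀ - max 0 (-dhat i - x₀)
      linarith
end

section
/- Existence of witness at the order statistic: if x ∈ X_Exact (i.e., some (s, r) with s ≥ 0, r ≥ 0 satisfy εNs - Σ_i r_i ≥ θN and dist(ξ_i, S(x)) ≥ s - r_i for all i), then the specific choice s* = the (k+1)-th smallest value among {dist(ξ_i, S(x))}_{i∈[N]} (where k = ⌊εN⌋) together with r_i* = max(0, s* - dist(ξ_i, S(x))) also satisfies all three constraint families. -/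
/-- existence of a witness at the order statistic.  If some
`(s, r)` with `s ≥ 0`, `r ≥ 0` satisfies `εNs - Σ_i r_i ≥ θN` and
`D_i ≥ s - r_i` for all `i`, then `s* = (k+1)`-th smallest of the `D_i`
(`k = ⌊εN⌋`) with `r_i* = max(0, s* - D_i)` also satisfies all constraints. -/
theorem stmt7 {N : ℕ} (hN : 1 ≤ N) (ε θ : ℝ) (hε0 : 0 < ε) (hε1 : ε < 1) (hθ : 0 < θ)
    (k : ℕ) (hk : k = ⌊ε * N⌋₊) (hkN : k < N)
    (D : Fin N → ℝ) (hD : ∀ i, 0 ≤ D i)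
    (h : ∃ (s : ℝ) (r : Fin N → ℝ), 0 ≤ s ∧ (∀ i, 0 ≤ r i) ∧
        ε * N * s - ∑ i, r i ≥ θ * N ∧ ∀ i, D i ≥ s - r i) :
    0 ≤ kthSmallest D ⟨k, hkN⟩ ∧
      (∀ i, 0 ≤ max 0 (kthSmallest D ⟨k, hkN⟩ - D i)) ∧
      ε * N * kthSmallest D ⟨k, hkN⟩ - ∑ i, max 0 (kthSmallest D ⟨k, hkN⟩ - D i) ≥ θ * N ∧
      ∀ i, D i ≥ kthSmallest D ⟨k, hkN⟩ - max 0 (kthSmallest D ⟨k, hkN⟩ - D i) := by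
  obtain ⟨s, r, hs0, hr0, hmain, hDi⟩ := h
  set σ := Tuple.sort D with hσ
  set j : Fin N := ⟨k, hkN⟩ with hj
  have hmono : Monotone (D ∘ σ) := Tuple.monotone_sort D
  set sstar := kthSmallest D j with hss
  have hstar : sstar = D (σ j) := rfl
  have hs0' : 0 ≤ sstar := hstar ▸ hD _
  -- ε N ≥ k and ε N < k + 1
  have hεN0 : (0:ℝ) ≤ ε * N := by positivity
  have hkle : (k : ℝ) ≤ ε * N := by rw [hk]; exact Nat.floor_le hεN0
  have hklt : ε * N < (k : ℝ) + 1 := by rw [hk]; exact Nat.lt_floor_add_one _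
  -- counting: at most k indices with D i < sstar
  have hAcard : (Finset.univ.filter (fun i => D i < sstar)).card ≤ k := by
    have hinj : Set.InjOn σ.symm (Finset.univ.filter (fun i => D i < sstar)) :=
      Set.injOn_of_injective σ.symm.injective
    have hsub : (Finset.univ.filter (fun i => D i < sstar)).image σ.symm ⊆ Finset.Iio j := by
      intro x hx
      simp only [Finset.mem_image, Finset.mem_filter, Finset.mem_univ, true_and] at hx
      obtain ⟨i, hi, rfl⟩ := hx
      rw [Finset.mem_Iio]
      by_contra hge
      push_neg at hge
      have h2 : D (σ j) ≤ D (σ (σ.symm i)) := hmono hge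
      simp only [Equiv.apply_symm_apply] at h2
      rw [hstar] at hi
      linarith
    have := Finset.card_le_card hsub
    rwa [Finset.card_image_of_injOn hinj, Fin.card_Iio] at this
  -- counting: at least k+1 indices with D i ≤ sstar
  have hBcard : k + 1 ≤ (Finset.univ.filter (fun i => D i ≤ sstar)).card := by
    have hsub : (Finset.Iic j).image σ ⊆ Finset.univ.filter (fun i => D i ≤ sstar) := by
      intro x hx
      simp only [Finset.mem_image, Finset.mem_Iic] at hx
      obtain ⟨i, hi, rfl⟩ := hx
      simp only [Finset.mem_filter, Finset.mem_univ, true_and]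
      rw [hstar]
      exact hmono hi
    have := Finset.card_le_card hsub
    rwa [Finset.card_image_of_injective _ σ.injective, Fin.card_Iic] at this
  have hrbd : ∀ i, max 0 (s - D i) ≤ r i := fun i =>
    max_le (hr0 i) (by linarith [hDi i])
  have hsumr : ∑ i, max 0 (s - D i) ≤ ∑ i, r i :=
    Finset.sum_le_sum fun i _ => hrbd i
  refine ⟨hs0', fun i => le_max_left _ _, ?_, ?_⟩
  · -- main inequality
    rcases le_or_gt s sstar with hcase | hcase
    · -- s ≤ sstar
      have hpt : ∀ i, max 0 (sstar - D i) ≤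
          max 0 (s - D i) + (if D i < sstar then sstar - s else 0) := by
        intro i
        by_cases h1 : D i < sstar
        · rw [if_pos h1]
          refine max_le ?_ ?_
          · have := le_max_left (0:ℝ) (s - D i); linarith
          · have := le_max_right (0:ℝ) (s - D i); linarith
        · rw [if_neg h1]
          push_neg at h1
          rw [max_eq_left (by linarith)]
          simp [le_max_left]
      have hsum : ∑ i, max 0 (sstar - D i) ≤
          ∑ i, max 0 (s - D i) +
            ((Finset.univ.filter (fun i => D i < sstar)).card : ℝ) * (sstar - s) := by
        calc ∑ i, max 0 (sstar - D i)
            ≤ ∑ i, (max 0 (s - D i) + (if D i < sstar then sstar - s else 0)) :=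
              Finset.sum_le_sum fun i _ => hpt i
          _ = ∑ i, max 0 (s - D i) + ∑ i, (if D i < sstar then sstar - s else 0) := by
              rw [Finset.sum_add_distrib]
          _ = ∑ i, max 0 (s - D i) +
              ((Finset.univ.filter (fun i => D i < sstar)).card : ℝ) * (sstar - s) := by
              rw [Finset.sum_ite, Finset.sum_const, Finset.sum_const_zero, add_zero,
                nsmul_eq_mul]
      have hc : ((Finset.univ.filter (fun i => D i < sstar)).card : ℝ) * (sstar - s) ≤
          (k : ℝ) * (sstar - s) := by
        apply mul_le_mul_of_nonneg_right _ (by linarith)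
        exact_mod_cast hAcard
      nlinarith [hsumr, hsum, hc, hkle, hcase]
    · -- sstar < s
      have hpt : ∀ i, max 0 (sstar - D i) + (if D i ≤ sstar then s - sstar else 0) ≤
          max 0 (s - D i) := by
        intro i
        by_cases h1 : D i ≤ sstar
        · rw [if_pos h1, max_eq_right (by linarith)]
          have := le_max_right (0:ℝ) (s - D i); linarith
        · rw [if_neg h1]
          push_neg at h1
          rw [max_eq_left (by linarith)]
          simp [le_max_left]
      have hsum : ∑ i, max 0 (sstar - D i) +
          ((Finset.univ.filter (fun i => D i ≤ sstar)).card : ℝ) * (s - sstar) ≤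
          ∑ i, max 0 (s - D i) := by
        calc ∑ i, max 0 (sstar - D i) +
              ((Finset.univ.filter (fun i => D i ≤ sstar)).card : ℝ) * (s - sstar)
            = ∑ i, (max 0 (sstar - D i) + (if D i ≤ sstar then s - sstar else 0)) := by
              rw [Finset.sum_add_distrib, Finset.sum_ite, Finset.sum_const,
                Finset.sum_const_zero, add_zero, nsmul_eq_mul]
          _ ≤ ∑ i, max 0 (s - D i) := Finset.sum_le_sum fun i _ => hpt i
      have hc : ((k : ℝ) + 1) * (s - sstar) ≤
          ((Finset.univ.filter (fun i => D i ≤ sstar)).card : ℝ) * (s - sstar) := by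
        apply mul_le_mul_of_nonneg_right _ (by linarith)
        exact_mod_cast hBcard
      nlinarith [hsumr, hsum, hc, hklt, hcase]
  · intro i
    have := le_max_right (0:ℝ) (sstar - D i)
    linarith
end

section
/- Proposition (strengthening equivalence, forward direction): if (x, s, r) satisfies s ≥ 0, r ≥ 0, εNs - Σ_i r_i ≥ θN, the distance constraints ((b_p^T ξ_i + d_p - a_p^T x)/‖b_p‖_*)^+ ≥ s - r_i restricted to i ∈ [N]_p for each p, and the valid inequalities (q_p + d_p - a_p^T x)/‖b_p‖_* ≥ s for each p, then the full distance constraints ((b_p^T ξ_i + d_p - a_p^T x)/‖b_p‖_*)^+ ≥ s - r_i hold for all i ∈ [N] and all p ∈ [P]. -/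
/-- forward direction of the strengthening equivalence.  If `(x, s, r)`
satisfies the reduced positive-part distance constraints (for `i ∈ [N]_p` only)
together with the valid inequalities, then the full distance constraints hold for
all `i ∈ [N]` and `p ∈ [P]`. -/
theorem stmt10 {K L N P : ℕ} (hN : 1 ≤ N) (hP : 1 ≤ P)
    (ε θ : ℝ) (hε0 : 0 < ε) (hε1 : ε < 1) (hθ : 0 < θ)
    (ξ : Fin N → Fin K → ℝ) (x : Fin L → ℝ)
    (a : Fin P → Fin L → ℝ) (b : Fin P → Fin K → ℝ) (d : Fin P → ℝ)
    (hb : ∀ p, b p ≠ 0)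
    (nb : Fin P → ℝ) (hnb : ∀ p, 0 < nb p)  -- `nb p` stands for `‖b_p‖_*`
    (k : ℕ) (hk : k = ⌊ε * N⌋₊) (hkN : k < N)
    (q : Fin P → ℝ)
    (hq : ∀ p, q p = kthSmallest (fun i => dotp (b p) (ξ i)) ⟨k, hkN⟩)
    (s : ℝ) (r : Fin N → ℝ)
    (hs : 0 ≤ s) (hr : ∀ i, 0 ≤ r i)
    (hsum : ε * N * s - ∑ i, r i ≥ θ * N)
    (hdist : ∀ p, ∀ i, dotp (b p) (ξ i) < q p →
        max ((dotp (b p) (ξ i) + d p - dotp (a p) x) / nb p) 0 ≥ s - r i)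
    (hvalid : ∀ p, (q p + d p - dotp (a p) x) / nb p ≥ s) :
    ∀ p, ∀ i : Fin N,
      max ((dotp (b p) (ξ i) + d p - dotp (a p) x) / nb p) 0 ≥ s - r i := by
  intro p i
  by_cases h : dotp (b p) (ξ i) < q p
  · exact hdist p i h
  · push_neg at h
    have h1 : (q p + d p - dotp (a p) x) / nb p ≤
        (dotp (b p) (ξ i) + d p - dotp (a p) x) / nb p := by
      gcongr
      exact le_of_lt (hnb p)
    have := hvalid p
    have := hr i
    calc s - r i ≤ (dotp (b p) (ξ i) + d p - dotp (a p) x) / nb p := by linarith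
      _ ≤ _ := le_max_left _ _
end

section
/- Proposition (strengthening equivalence, reverse direction): if x ∈ X_Exact then there exist (s, r) satisfying the strengthened constraint system; in particular, with s* equal to the (k+1)-th smallest among the distances D_i = dist(ξ_i, S(x)) and r_i* = max(0, s* - D_i), the valid inequalities (q_p + d_p - a_p^T x)/‖b_p‖_* ≥ s* hold for all p ∈ [P]. -/
lemma kthSmallest_ge_of_card {N : ℕ} (u : Fin N → ℝ) (j : Fin N) (v : ℝ)
    (h : (Finset.univ.filter (fun i => u i < v)).card ≤ j.val) :
    v ≤ kthSmallest u j := by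
  by_contra hlt
  push_neg at hlt
  set σ := Tuple.sort u with hσ
  have hsub : (Finset.Iic j).image σ ⊆ Finset.univ.filter (fun i => u i < v) := by
    intro i hi
    simp only [Finset.mem_image, Finset.mem_Iic] at hi
    obtain ⟨m, hm, rfl⟩ := hi
    have := Tuple.monotone_sort u hm
    simp only [Function.comp_apply] at this
    simp only [Finset.mem_filter, Finset.mem_univ, true_and]
    exact lt_of_le_of_lt this hlt
  have hcard := Finset.card_le_card hsub
  rw [Finset.card_image_of_injective _ σ.injective, Fin.card_Iic] at hcard
  omega

lemma kthSmallest_gt_of_card {N : ℕ} (u : Fin N → ℝ) (j : Fin N) (v : ℝ)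
    (h : (Finset.univ.filter (fun i => u i ≤ v)).card ≤ j.val) :
    v < kthSmallest u j := by
  by_contra hlt
  push_neg at hlt
  set σ := Tuple.sort u with hσ
  have hsub : (Finset.Iic j).image σ ⊆ Finset.univ.filter (fun i => u i ≤ v) := by
    intro i hi
    simp only [Finset.mem_image, Finset.mem_Iic] at hi
    obtain ⟨m, hm, rfl⟩ := hi
    have := Tuple.monotone_sort u hm
    simp only [Function.comp_apply] at this
    simp only [Finset.mem_filter, Finset.mem_univ, true_and]
    exact le_trans this hlt
  have hcard := Finset.card_le_card hsub
  rw [Finset.card_image_of_injective _ σ.injective, Fin.card_Iic] at hcard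
  omega

lemma card_lt_kthSmallest_le {N : ℕ} (u : Fin N → ℝ) (j : Fin N) :
    (Finset.univ.filter (fun i => u i < kthSmallest u j)).card ≤ j.val := by
  set σ := Tuple.sort u with hσ
  have hsub : (Finset.univ.filter (fun i => u i < kthSmallest u j)).image σ.symm
      ⊆ Finset.Iio j := by
    intro i hi
    simp only [Finset.mem_image, Finset.mem_filter, Finset.mem_univ, true_and] at hi
    obtain ⟨m, hm, rfl⟩ := hi
    simp only [Finset.mem_Iio]
    by_contra hge
    push_neg at hge
    have := Tuple.monotone_sort u hge
    simp only [Function.comp_apply] at this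
    rw [Equiv.apply_symm_apply] at this
    exact absurd hm (not_lt.mpr this)
  have hcard := Finset.card_le_card hsub
  rw [Finset.card_image_of_injective _ σ.symm.injective, Fin.card_Iio] at hcard
  exact hcard

/-- reverse direction of the strengthening equivalence.  If
`x ∈ X_Exact` via some `(s, r)`, then with `s*` the `(k+1)`-th smallest of the
distances `D_i = min_p ((b_p⬝ξ_i + d_p - a_p⬝x)/‖b_p‖_*)⁺`, the valid inequalities
`(q_p + d_p - a_p⬝x)/‖b_p‖_* ≥ s*` hold for all `p`. -/
theorem stmt11 {K L N P : ℕ} [NeZero P] (hN : 1 ≤ N)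
    (ε θ : ℝ) (hε0 : 0 < ε) (hε1 : ε < 1) (hθ : 0 < θ)
    (ξ : Fin N → Fin K → ℝ) (x : Fin L → ℝ)
    (a : Fin P → Fin L → ℝ) (b : Fin P → Fin K → ℝ) (d : Fin P → ℝ)
    (hb : ∀ p, b p ≠ 0)
    (nb : Fin P → ℝ) (hnb : ∀ p, 0 < nb p)  -- `nb p` stands for `‖b_p‖_*`
    (k : ℕ) (hk : k = ⌊ε * N⌋₊) (hkN : k < N)
    (q : Fin P → ℝ)
    (hq : ∀ p, q p = kthSmallest (fun i => dotp (b p) (ξ i)) ⟨k, hkN⟩)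
    (D : Fin N → ℝ)
    (hD : ∀ i, D i = Finset.univ.inf' Finset.univ_nonempty
        (fun p => max ((dotp (b p) (ξ i) + d p - dotp (a p) x) / nb p) 0))
    (s : ℝ) (r : Fin N → ℝ)
    (hs : 0 ≤ s) (hr : ∀ i, 0 ≤ r i)
    (hsum : ε * N * s - ∑ i, r i ≥ θ * N)
    (hdist : ∀ i, D i ≥ s - r i) :
    ∀ p, (q p + d p - dotp (a p) x) / nb p ≥ kthSmallest D ⟨k, hkN⟩ := by
  have hN0 : (0:ℝ) < N := by exact_mod_cast Nat.lt_of_lt_of_le Nat.zero_lt_one hN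
  have hrsum : (0:ℝ) ≤ ∑ i, r i := Finset.sum_nonneg fun i _ => hr i
  -- s > 0
  have hs0 : 0 < s := by
    rcases lt_or_eq_of_le hs with h | h
    · exact h
    · exfalso
      rw [← h] at hsum
      nlinarith
  -- at most k indices have D i ≤ 0
  have hcard0 : (Finset.univ.filter (fun i => D i ≤ 0)).card ≤ k := by
    set T := Finset.univ.filter (fun i : Fin N => D i ≤ 0) with hT
    have hsub : T ⊆ Finset.univ.filter (fun i : Fin N => s ≤ r i) := by
      intro i hi
      simp only [hT, Finset.mem_filter, Finset.mem_univ, true_and] at hi ⊢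
      have := hdist i
      linarith
    have h1 : (T.card : ℝ) * s ≤ ∑ i, r i := by
      calc (T.card : ℝ) * s
          ≤ ((Finset.univ.filter (fun i : Fin N => s ≤ r i)).card : ℝ) * s := by
            apply mul_le_mul_of_nonneg_right _ hs
            exact_mod_cast Finset.card_le_card hsub
        _ ≤ ∑ i ∈ Finset.univ.filter (fun i : Fin N => s ≤ r i), r i := by
            rw [mul_comm]
            calc s * ((Finset.univ.filter (fun i : Fin N => s ≤ r i)).card : ℝ)
                = ∑ _i ∈ Finset.univ.filter (fun i : Fin N => s ≤ r i), s := by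
                  rw [Finset.sum_const, nsmul_eq_mul, mul_comm]
              _ ≤ _ := Finset.sum_le_sum fun i hi => by
                  simp only [Finset.mem_filter] at hi; exact hi.2
        _ ≤ ∑ i, r i := Finset.sum_le_sum_of_subset_of_nonneg (Finset.filter_subset _ _)
            (fun i _ _ => hr i)
    have h2 : (T.card : ℝ) * s < ε * N * s := by nlinarith
    have h3 : (T.card : ℝ) < ε * N := lt_of_mul_lt_mul_right h2 hs
    rw [hk]
    exact Nat.le_floor h3.le
  -- s* > 0
  set sstar := kthSmallest D ⟨k, hkN⟩ with hsstar
  have hsstar0 : 0 < sstar :=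
    kthSmallest_gt_of_card D ⟨k, hkN⟩ 0 hcard0
  -- at most k indices have D i < s*
  have hcardD : (Finset.univ.filter (fun i => D i < sstar)).card ≤ k :=
    card_lt_kthSmallest_le D ⟨k, hkN⟩
  intro p
  set v := sstar * nb p - d p + dotp (a p) x with hv
  have hqv : v ≤ q p := by
    rw [hq p]
    apply kthSmallest_ge_of_card
    refine le_trans (Finset.card_le_card ?_) hcardD
    intro i hi
    simp only [Finset.mem_filter, Finset.mem_univ, true_and] at hi ⊢
    -- dotp (b p) (ξ i) < v means c_i < sstar
    have hc : (dotp (b p) (ξ i) + d p - dotp (a p) x) / nb p < sstar := by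
      rw [div_lt_iff₀ (hnb p)]
      rw [hv] at hi
      linarith
    have hDle : D i ≤ max ((dotp (b p) (ξ i) + d p - dotp (a p) x) / nb p) 0 := by
      rw [hD i]
      exact Finset.inf'_le _ (Finset.mem_univ p)
    calc D i ≤ _ := hDle
      _ < sstar := max_lt hc hsstar0
  rw [ge_iff_le, le_div_iff₀ (hnb p)]
  rw [hv] at hqv
  linarith
end

section
/- Theorem (SFLA is no more conservative than LA): X_LA(κ) ⊆ X_SFLA(κ). Concretely, if for x there exist s ≥ 0, r ≥ 0 with εNs - Σ_i r_i ≥ θN and κ_i·min_p (b_p^T ξ_i + d_p - a_p^T x)/‖b_p‖_* ≥ s - r_i for all i ∈ [N] and p ∈ [P], then there exist s' ≥ 0, r' ≥ 0 satisfying the SFLA constraints: εNs' - Σ_i r_i' ≥ θN, κ_i·(b_p^T ξ_i + d_p - a_p^T x)/‖b_p‖_* ≥ s' - r_i' for i ∈ [N]_p, p ∈ [P], and (q_p + d_p - a_p^T x)/‖b_p‖_* ≥ s' for all p ∈ [P]. -/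
open Finset

/-!
The LA witness `(s, r)` may be replaced by `s' = d̂_(k+1)`, the `(k+1)`-th smallest of the
`d̂_i`, and `r'_i = (s' - d̂_i)⁺`: since `k ≤ εN < k + 1`, the concave piecewise linear function
`t ↦ εN t - ∑ᵢ (t - d̂_i)⁺` is maximal at `t = s'`, so the budget constraint survives, and the
scaled constraints hold because `d̂_i ≤ κ_i (b_p⬝ξ_i + d_p - a_p⬝x)/‖b_p‖_*`. Markov's inequality
shows that at most `k` of the `r_i` reach `s`, so some `i` with `d̂_i ≤ s'` has `d̂_i ≥ s - r_i > 0`,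
whence `s' > 0`. Finally at least `k + 1` samples satisfy `b_p⬝ξ_i ≤ q_p` while at most `k` have
`d̂_i < s'`; a sample in the first set but not the second gives
`s' ≤ d̂_i ≤ (b_p⬝ξ_i + d_p - a_p⬝x)/‖b_p‖_* ≤ (q_p + d_p - a_p⬝x)/‖b_p‖_*`.
-/

theorem card_filter_lt_apply_sort {n : ℕ} {α : Type*} [LinearOrder α] (f : Fin n → α)
    (j : Fin n) : #{i | f i < f (Tuple.sort f j)} ≤ j := by
  have h := (Tuple.lt_card_lt_iff_apply_lt_of_monotone (Tuple.monotone_sort f)).not.2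
    (lt_irrefl (f (Tuple.sort f j)))
  rwa [not_lt, card_equiv (Tuple.sort f) (t := {i | f i < f (Tuple.sort f j)}) (by simp)] at h

theorem lt_card_filter_le_apply_sort {n : ℕ} {α : Type*} [LinearOrder α] (f : Fin n → α)
    (j : Fin n) : j < #{i | f i ≤ f (Tuple.sort f j)} := by
  have h := (Tuple.lt_card_le_iff_apply_le_of_monotone (Tuple.monotone_sort f)).2
    (le_refl (f (Tuple.sort f j)))
  rwa [card_equiv (Tuple.sort f) (t := {i | f i ≤ f (Tuple.sort f j)}) (by simp)] at h

theorem card_filter_le_mul_le_sum {ι R : Type*} [Fintype ι] [Semiring R] [LinearOrder R]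
    [IsOrderedRing R] {r : ι → R} (hr : ∀ i, 0 ≤ r i) (s : R) :
    #{i | s ≤ r i} * s ≤ ∑ i, r i :=
  calc (#{i | s ≤ r i} : R) * s = ∑ i ∈ {i | s ≤ r i}, s := by simp
    _ ≤ ∑ i ∈ {i | s ≤ r i}, r i := sum_le_sum fun i hi => (mem_filter.1 hi).2
    _ ≤ ∑ i, r i := sum_le_sum_of_subset_of_nonneg (subset_univ _) fun i _ _ => hr i

theorem card_filter_le_lt_of_sum_lt {ι R : Type*} [Fintype ι] [Semiring R] [LinearOrder R]
    [IsStrictOrderedRing R] {r : ι → R} (hr : ∀ i, 0 ≤ r i) {s : R} (hs : 0 < s) {n : ℕ}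
    (h : ∑ i, r i < n * s) : #{i | s ≤ r i} < n :=
  Nat.cast_lt.1 (lt_of_mul_lt_mul_right ((card_filter_le_mul_le_sum hr s).trans_lt h) hs.le)

section PositivePartSum

variable {ι : Type*} [Fintype ι] (y : ι → ℝ) {t t₀ : ℝ}

theorem sum_max_zero_sub_sub_sum_le (ht : t ≤ t₀) :
    ∑ i, max 0 (t₀ - y i) - ∑ i, max 0 (t - y i) ≤ #{i | y i < t₀} * (t₀ - t) := by
  rw [← sum_sub_distrib, ← nsmul_eq_mul, ← sum_const, sum_filter]
  refine sum_le_sum fun i _ => ?_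
  split_ifs with h
  · exact sub_le_iff_le_add.2 (max_le (by linarith [le_max_left 0 (t - y i)])
      (by linarith [le_max_right 0 (t - y i)]))
  · rw [max_eq_left (by linarith), max_eq_left (by linarith), sub_zero]

theorem le_sum_max_zero_sub_sub_sum (ht : t₀ ≤ t) :
    #{i | y i ≤ t₀} * (t - t₀) ≤ ∑ i, max 0 (t - y i) - ∑ i, max 0 (t₀ - y i) := by
  rw [← sum_sub_distrib, ← nsmul_eq_mul, ← sum_const, sum_filter]
  refine sum_le_sum fun i _ => ?_
  split_ifs with h
  · rw [max_eq_right (by linarith), max_eq_right (by linarith)]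
    linarith
  · exact sub_nonneg.2 (max_le_max le_rfl (by linarith))

/-- The concave function `t ↦ c t - ∑ᵢ (t - yᵢ)⁺` has slope `c - #{i | yᵢ < t₀}` just left of
`t₀` and `c - #{i | yᵢ ≤ t₀}` just right of it. -/
theorem mul_sub_sum_max_zero_sub_le {c : ℝ} (hlt : #{i | y i < t₀} ≤ c)
    (hle : c ≤ #{i | y i ≤ t₀}) (t : ℝ) :
    c * t - ∑ i, max 0 (t - y i) ≤ c * t₀ - ∑ i, max 0 (t₀ - y i) := by
  rcases le_total t t₀ with ht | ht
  · have := mul_le_mul_of_nonneg_right hlt (sub_nonneg.2 ht)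
    linarith [sum_max_zero_sub_sub_sum_le y ht]
  · have := mul_le_mul_of_nonneg_right hle (sub_nonneg.2 ht)
    linarith [le_sum_max_zero_sub_sub_sum y ht]

theorem mul_sub_sum_le_mul_sub_sum_max_zero_sub {c s : ℝ} {r : ι → ℝ} (hr : ∀ i, 0 ≤ r i)
    (hsr : ∀ i, s - r i ≤ y i) (hlt : #{i | y i < t₀} ≤ c) (hle : c ≤ #{i | y i ≤ t₀}) :
    c * s - ∑ i, r i ≤ c * t₀ - ∑ i, max 0 (t₀ - y i) := by
  have : ∑ i, max 0 (s - y i) ≤ ∑ i, r i :=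
    sum_le_sum fun i _ => max_le (hr i) (by linarith [hsr i])
  linarith [mul_sub_sum_max_zero_sub_le y hlt hle s]

end PositivePartSum

theorem stmt13_general {K L N P : ℕ} [NeZero P]
    (ε θ : ℝ) (hε0 : 0 < ε) (hθ : 0 < θ)
    (ξ : Fin N → Fin K → ℝ) (x : Fin L → ℝ)
    (a : Fin P → Fin L → ℝ) (b : Fin P → Fin K → ℝ) (d : Fin P → ℝ)
    (nb : Fin P → ℝ) (hnb : ∀ p, 0 < nb p)  -- `nb p` stands for `‖b_p‖_*`
    (κ : Fin N → ℝ) (hκ0 : ∀ i, 0 ≤ κ i) (hκ1 : ∀ i, κ i ≤ 1)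
    (k : ℕ) (hk : k = ⌊ε * N⌋₊) (hkN : k < N)
    (q : Fin P → ℝ)
    (hq : ∀ p, q p = kthSmallest (fun i => dotp (b p) (ξ i)) ⟨k, hkN⟩)
    (h : ∃ (s : ℝ) (r : Fin N → ℝ), 0 ≤ s ∧ (∀ i, 0 ≤ r i) ∧
        ε * N * s - ∑ i, r i ≥ θ * N ∧
        ∀ i, κ i * Finset.univ.inf' Finset.univ_nonempty
            (fun p => (dotp (b p) (ξ i) + d p - dotp (a p) x) / nb p) ≥ s - r i) :
    ∃ (s' : ℝ) (r' : Fin N → ℝ), 0 ≤ s' ∧ (∀ i, 0 ≤ r' i) ∧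
      ε * N * s' - ∑ i, r' i ≥ θ * N ∧
      (∀ p, ∀ i, dotp (b p) (ξ i) < q p →
        κ i * ((dotp (b p) (ξ i) + d p - dotp (a p) x) / nb p) ≥ s' - r' i) ∧
      ∀ p, (q p + d p - dotp (a p) x) / nb p ≥ s' := by
  obtain ⟨s, r, -, hr, hbudget, hLA⟩ := h
  set m : Fin N → ℝ := fun i => univ.inf' univ_nonempty
    fun p => (dotp (b p) (ξ i) + d p - dotp (a p) x) / nb p
  set dh : Fin N → ℝ := fun i => κ i * m i
  set s' := kthSmallest dh ⟨k, hkN⟩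
  have hN : (0 : ℝ) < N := Nat.cast_pos.2 (Nat.zero_lt_of_lt hkN)
  have hkεN : (k : ℝ) ≤ ε * N := hk ▸ Nat.floor_le (by positivity)
  have hεNk : ε * N < k + 1 := hk ▸ Nat.lt_floor_add_one _
  have hs : 0 < s :=
    pos_of_mul_pos_right (by nlinarith [Fintype.sum_nonneg (f := r) hr]) (mul_pos hε0 hN).le
  have hlt : #{i | dh i < s'} ≤ k := card_filter_lt_apply_sort dh ⟨k, hkN⟩
  have hle : k < #{i | dh i ≤ s'} := lt_card_filter_le_apply_sort dh ⟨k, hkN⟩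
  have hs' : 0 < s' := by
    have hbig : #{i | s ≤ r i} < k + 1 :=
      card_filter_le_lt_of_sum_lt hr hs (by push_cast; nlinarith)
    obtain ⟨i, hi, hri⟩ := exists_mem_notMem_of_card_lt_card (hbig.trans_le hle)
    simp only [mem_filter, mem_univ, true_and, not_le] at hi hri
    linarith [hLA i]
  refine ⟨s', fun i => max 0 (s' - dh i), hs'.le, fun i => le_max_left _ _, ?_, ?_, ?_⟩
  · exact hbudget.trans <| mul_sub_sum_le_mul_sub_sum_max_zero_sub dh hr (fun i => hLA i)
      ((Nat.cast_le.2 hlt).trans hkεN) (hεNk.le.trans (by exact_mod_cast hle))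
  · intro p i _
    have : dh i ≤ κ i * ((dotp (b p) (ξ i) + d p - dotp (a p) x) / nb p) :=
      mul_le_mul_of_nonneg_left (inf'_le _ (mem_univ p)) (hκ0 i)
    linarith [le_max_right 0 (s' - dh i)]
  · intro p
    have hq_le : k < #{i | dotp (b p) (ξ i) ≤ q p} := by
      rw [hq p]; exact lt_card_filter_le_apply_sort (fun i => dotp (b p) (ξ i)) ⟨k, hkN⟩
    obtain ⟨i, hi, hsi⟩ := exists_mem_notMem_of_card_lt_card (hlt.trans_lt hq_le)
    simp only [mem_filter, mem_univ, true_and, not_lt] at hi hsi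
    have hm : 0 < m i := pos_of_mul_pos_right (hs'.trans_le hsi) (hκ0 i)
    calc s' ≤ dh i := hsi
      _ ≤ m i := mul_le_of_le_one_left hm.le (hκ1 i)
      _ ≤ (dotp (b p) (ξ i) + d p - dotp (a p) x) / nb p := inf'_le _ (mem_univ p)
      _ ≤ (q p + d p - dotp (a p) x) / nb p := by gcongr; exact (hnb p).le

/-- `X_LA(κ) ⊆ X_SFLA(κ)`.  If some `(s, r)` satisfies the LA
constraints `κ_i · min_p (b_p⬝ξ_i + d_p - a_p⬝x)/‖b_p‖_* ≥ s - r_i` for all `i`,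
then some `(s', r')` satisfies the SFLA constraints (scaled constraints on
`i ∈ [N]_p` plus the valid inequalities). -/
theorem stmt13 {K L N P : ℕ} [NeZero P] (hN : 1 ≤ N)
    (ε θ : ℝ) (hε0 : 0 < ε) (hε1 : ε < 1) (hθ : 0 < θ)
    (ξ : Fin N → Fin K → ℝ) (x : Fin L → ℝ)
    (a : Fin P → Fin L → ℝ) (b : Fin P → Fin K → ℝ) (d : Fin P → ℝ)
    (hb : ∀ p, b p ≠ 0)
    (nb : Fin P → ℝ) (hnb : ∀ p, 0 < nb p)  -- `nb p` stands for `‖b_p‖_*`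
    (κ : Fin N → ℝ) (hκ0 : ∀ i, 0 ≤ κ i) (hκ1 : ∀ i, κ i ≤ 1)
    (k : ℕ) (hk : k = ⌊ε * N⌋₊) (hkN : k < N)
    (q : Fin P → ℝ)
    (hq : ∀ p, q p = kthSmallest (fun i => dotp (b p) (ξ i)) ⟨k, hkN⟩)
    (h : ∃ (s : ℝ) (r : Fin N → ℝ), 0 ≤ s ∧ (∀ i, 0 ≤ r i) ∧
        ε * N * s - ∑ i, r i ≥ θ * N ∧
        ∀ i, κ i * Finset.univ.inf' Finset.univ_nonempty
            (fun p => (dotp (b p) (ξ i) + d p - dotp (a p) x) / nb p) ≥ s - r i) :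
    ∃ (s' : ℝ) (r' : Fin N → ℝ), 0 ≤ s' ∧ (∀ i, 0 ≤ r' i) ∧
      ε * N * s' - ∑ i, r' i ≥ θ * N ∧
      (∀ p, ∀ i, dotp (b p) (ξ i) < q p →
        κ i * ((dotp (b p) (ξ i) + d p - dotp (a p) x) / nb p) ≥ s' - r' i) ∧
      ∀ p, (q p + d p - dotp (a p) x) / nb p ≥ s' :=
  stmt13_general ε θ hε0 hθ ξ x a b d nb hnb κ hκ0 hκ1 k hk hkN q hq h
end

section
/- Corollary (equivalence at κ = 1): X_SFLA(1) = X_LA(1). That is, for κ_i = 1 for all i, x admits a feasible (s, r) for the SFLA constraint system (with constraints only on i ∈ [N]_p and the valid inequalities) if and only if x admits a feasible (s, r) for the LA constraint system (with constraints for all i ∈ [N]). -/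
/-- `X_SFLA(1) = X_LA(1)`.  With `κ_i = 1` for all `i`, the point `x`
admits a feasible `(s, r)` for the SFLA constraint system (constraints only on
`i ∈ [N]_p` plus valid inequalities) iff it admits a feasible `(s, r)` for the LA
constraint system (constraints for all `i ∈ [N]`). -/
theorem stmt14 {K L N P : ℕ} (hN : 1 ≤ N) (hP : 1 ≤ P)
    (ε θ : ℝ) (hε0 : 0 < ε) (hε1 : ε < 1) (hθ : 0 < θ)
    (ξ : Fin N → Fin K → ℝ) (x : Fin L → ℝ)
    (a : Fin P → Fin L → ℝ) (b : Fin P → Fin K → ℝ) (d : Fin P → ℝ)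
    (hb : ∀ p, b p ≠ 0)
    (nb : Fin P → ℝ) (hnb : ∀ p, 0 < nb p)  -- `nb p` stands for `‖b_p‖_*`
    (k : ℕ) (hk : k = ⌊ε * N⌋₊) (hkN : k < N)
    (q : Fin P → ℝ)
    (hq : ∀ p, q p = kthSmallest (fun i => dotp (b p) (ξ i)) ⟨k, hkN⟩) :
    (∃ (s : ℝ) (r : Fin N → ℝ), 0 ≤ s ∧ (∀ i, 0 ≤ r i) ∧
        ε * N * s - ∑ i, r i ≥ θ * N ∧
        (∀ p, ∀ i, dotp (b p) (ξ i) < q p →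
          (dotp (b p) (ξ i) + d p - dotp (a p) x) / nb p ≥ s - r i) ∧
        ∀ p, (q p + d p - dotp (a p) x) / nb p ≥ s) ↔
      (∃ (s : ℝ) (r : Fin N → ℝ), 0 ≤ s ∧ (∀ i, 0 ≤ r i) ∧
        ε * N * s - ∑ i, r i ≥ θ * N ∧
        ∀ p, ∀ i : Fin N, (dotp (b p) (ξ i) + d p - dotp (a p) x) / nb p ≥ s - r i) := by
  have hεN1 : ε * N < (k : ℝ) + 1 := by
    rw [hk]; exact Nat.lt_floor_add_one (ε * N)
  constructor
  · rintro ⟨s, r, hs, hr, hbud, hcon, hval⟩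
    refine ⟨s, r, hs, hr, hbud, ?_⟩
    intro p i
    rcases lt_or_ge (dotp (b p) (ξ i)) (q p) with h | h
    · exact hcon p i h
    · have h1 : (q p + d p - dotp (a p) x) / nb p ≤
          (dotp (b p) (ξ i) + d p - dotp (a p) x) / nb p := by
        have := hnb p; gcongr <;> linarith
      have := hval p
      have := hr i
      linarith
  · rintro ⟨s, r, hs, hr, hbud, hcon⟩
    set f : Fin P → ℝ := fun p => s - (q p + d p - dotp (a p) x) / nb p with hf
    have hne : (Finset.univ : Finset (Fin P)).Nonempty := ⟨⟨0, hP⟩, Finset.mem_univ _⟩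
    set δ0 : ℝ := Finset.univ.sup' hne f with hδ0
    set δ : ℝ := max δ0 0 with hδ
    have hδ0' : 0 ≤ δ := le_max_right _ _
    obtain ⟨p₀, -, hp₀⟩ := Finset.exists_mem_eq_sup' hne f
    -- the set of k+1 indices with small values for p₀
    set t : Fin N → ℝ := fun i => dotp (b p₀) (ξ i) with ht
    set σ := Tuple.sort t with hσ
    set S : Finset (Fin N) := (Finset.Iic (⟨k, hkN⟩ : Fin N)).image σ with hS
    have hScard : S.card = k + 1 := by
      rw [hS, Finset.card_image_of_injective _ σ.injective, Fin.card_Iic]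
    -- every i in S has t i ≤ q p₀
    have hSle : ∀ i ∈ S, t i ≤ q p₀ := by
      intro i hi
      rw [hS, Finset.mem_image] at hi
      obtain ⟨j, hj, rfl⟩ := hi
      rw [Finset.mem_Iic] at hj
      have := Tuple.monotone_sort t hj
      simpa [hq p₀, kthSmallest, ht] using this
    -- every i in S has r i ≥ δ
    have hrδ : ∀ i ∈ S, δ ≤ r i := by
      intro i hi
      have h1 : s - r i ≤ (t i + d p₀ - dotp (a p₀) x) / nb p₀ := hcon p₀ i
      have h2 : (t i + d p₀ - dotp (a p₀) x) / nb p₀ ≤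
          (q p₀ + d p₀ - dotp (a p₀) x) / nb p₀ := by
        have := hnb p₀; have := hSle i hi; gcongr <;> linarith
      have h3 : δ0 ≤ r i := by
        rw [hδ0, hp₀, hf]; dsimp only; linarith
      exact max_le h3 (hr i)
    have hsum : ((k : ℝ) + 1) * δ ≤ ∑ i, r i := by
      have h1 : ∑ i ∈ S, δ ≤ ∑ i ∈ S, r i := Finset.sum_le_sum hrδ
      have h2 : ∑ i ∈ S, r i ≤ ∑ i, r i :=
        Finset.sum_le_sum_of_subset_of_nonneg (Finset.subset_univ S)
          (fun i _ _ => hr i)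
      have h3 : ∑ i ∈ S, δ = ((k : ℝ) + 1) * δ := by
        rw [Finset.sum_const, hScard]; push_cast; ring
      linarith
    have hs' : 0 ≤ s - δ := by
      have hNpos : (0:ℝ) < N := by exact_mod_cast hN
      nlinarith [mul_pos hθ hNpos, mul_le_mul_of_nonneg_right hεN1.le hs]
    refine ⟨s - δ, fun i => max (r i - δ) 0, hs', fun i => le_max_right _ _, ?_, ?_, ?_⟩
    · -- budget
      have hsplit : ∑ i ∈ Finset.univ \ S, (fun i => max (r i - δ) 0) i
            + ∑ i ∈ S, (fun i => max (r i - δ) 0) i = ∑ i, max (r i - δ) 0 :=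
        Finset.sum_sdiff (Finset.subset_univ S)
      have hA : ∑ i ∈ S, max (r i - δ) 0 = (∑ i ∈ S, r i) - ((k:ℝ)+1) * δ := by
        have : ∀ i ∈ S, max (r i - δ) 0 = r i - δ := by
          intro i hi; exact max_eq_left (by linarith [hrδ i hi])
        rw [Finset.sum_congr rfl this, Finset.sum_sub_distrib, Finset.sum_const, hScard]
        push_cast; ring
      have hB : ∑ i ∈ Finset.univ \ S, max (r i - δ) 0 ≤ ∑ i ∈ Finset.univ \ S, r i :=
        Finset.sum_le_sum (fun i _ => max_le (by linarith [hδ0']) (hr i))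
      have hC : ∑ i ∈ Finset.univ \ S, r i + ∑ i ∈ S, r i = ∑ i, r i :=
        Finset.sum_sdiff (Finset.subset_univ S)
      have htot : ∑ i, max (r i - δ) 0 ≤ ∑ i, r i - ((k:ℝ)+1) * δ := by
        rw [← hsplit]; dsimp only; linarith
      have hεδ : ε * N * δ ≤ ((k:ℝ)+1) * δ := by nlinarith
      have expand : ε * (N:ℝ) * (s - δ) = ε * N * s - ε * N * δ := by ring
      linarith [htot, hbud, hεδ, expand]
    · -- constraints on [N]_p
      intro p i _
      have h1 : s - r i ≤ (dotp (b p) (ξ i) + d p - dotp (a p) x) / nb p := hcon p i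
      have h2 : r i - δ ≤ max (r i - δ) 0 := le_max_left _ _
      linarith
    · -- valid inequalities
      intro p
      have h1 : f p ≤ δ0 := Finset.le_sup' f (Finset.mem_univ p)
      have h2 : δ0 ≤ δ := le_max_left _ _
      rw [hf] at h1; dsimp only at h1
      linarith
end

section
/- Exactness when εN ≤ 1 implies k = 0: if ε ≤ 1/N then ⌊εN⌋ = 0, so the index sets [N]_p are empty and the SFLA system with κ = 1 reduces to: s ≥ 0, r ≥ 0, εNs - Σ_i r_i ≥ θN, and (q_p + d_p - a_p^T x)/‖b_p‖_* ≥ s for all p, where q_p = min_i b_p^T ξ_i; moreover, x is feasible for this reduced system if and only if x is feasible for the exact system (with the positive-part distance constraints for all i). -/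
/-- exactness when `εN < 1`.  Then `k = ⌊εN⌋ = 0`, the index sets
`[N]_p` are empty, `q_p = min_i b_p⬝ξ_i`, and `x` is feasible for the reduced
SFLA system (with only the valid inequalities) iff it is feasible for the exact
system (positive-part distance constraints for all `i`). -/
theorem stmt17 {K L N P : ℕ} [NeZero N] [NeZero P]
    (ε θ : ℝ) (hε0 : 0 < ε) (hεN : ε * N < 1) (hθ : 0 < θ)
    (ξ : Fin N → Fin K → ℝ) (x : Fin L → ℝ)
    (a : Fin P → Fin L → ℝ) (b : Fin P → Fin K → ℝ) (d : Fin P → ℝ)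
    (hb : ∀ p, b p ≠ 0)
    (nb : Fin P → ℝ) (hnb : ∀ p, 0 < nb p)  -- `nb p` stands for `‖b_p‖_*`
    (q : Fin P → ℝ)
    (hq : ∀ p, q p = Finset.univ.inf' Finset.univ_nonempty
        (fun i : Fin N => dotp (b p) (ξ i))) :
    ⌊ε * N⌋₊ = 0 ∧
      ((∃ (s : ℝ) (r : Fin N → ℝ), 0 ≤ s ∧ (∀ i, 0 ≤ r i) ∧
          ε * N * s - ∑ i, r i ≥ θ * N ∧
          ∀ p, (q p + d p - dotp (a p) x) / nb p ≥ s) ↔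
        (∃ (s : ℝ) (r : Fin N → ℝ), 0 ≤ s ∧ (∀ i, 0 ≤ r i) ∧
          ε * N * s - ∑ i, r i ≥ θ * N ∧
          ∀ i, Finset.univ.inf' Finset.univ_nonempty
              (fun p => max ((dotp (b p) (ξ i) + d p - dotp (a p) x) / nb p) 0)
            ≥ s - r i)) := by
  have hN : (0 : ℝ) < N := by
    exact_mod_cast Nat.pos_of_ne_zero (NeZero.ne N)
  have hθN : 0 < θ * N := mul_pos hθ hN
  refine ⟨Nat.floor_eq_zero.mpr hεN, ?_, ?_⟩
  · rintro ⟨s, r, hs, hr, hsum, hall⟩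
    refine ⟨s, r, hs, hr, hsum, fun i => ?_⟩
    refine Finset.le_inf' _ _ (fun p _ => ?_)
    have h1 : q p ≤ dotp (b p) (ξ i) := by
      rw [hq]; exact Finset.inf'_le _ (Finset.mem_univ i)
    have h2 : (q p + d p - dotp (a p) x) / nb p ≤
        (dotp (b p) (ξ i) + d p - dotp (a p) x) / nb p := by
      have h3 : q p + d p - dotp (a p) x ≤ dotp (b p) (ξ i) + d p - dotp (a p) x := by
        linarith
      gcongr <;> linarith [hnb p]
    calc s - r i ≤ s := by linarith [hr i]
      _ ≤ (q p + d p - dotp (a p) x) / nb p := hall p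
      _ ≤ (dotp (b p) (ξ i) + d p - dotp (a p) x) / nb p := h2
      _ ≤ max ((dotp (b p) (ξ i) + d p - dotp (a p) x) / nb p) 0 := le_max_left _ _
  · rintro ⟨s, r, hs, hr, hsum, hall⟩
    have hrsum : 0 ≤ ∑ i, r i := Finset.sum_nonneg (fun i _ => hr i)
    have hεNs : ε * N * s ≤ s := by nlinarith
    have hsums : θ * N + ∑ i, r i ≤ s := by linarith
    refine ⟨s - ∑ i, r i, fun _ => 0, by linarith, fun i => le_refl 0, ?_, fun p => ?_⟩
    · simp only [Finset.sum_const_zero]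
      nlinarith
    · obtain ⟨ip, _, hip⟩ := Finset.exists_mem_eq_inf' (Finset.univ_nonempty)
        (fun i : Fin N => dotp (b p) (ξ i))
      have hv := hall ip
      have hle : s - r ip ≤
          max ((dotp (b p) (ξ ip) + d p - dotp (a p) x) / nb p) 0 :=
        le_trans hv (Finset.inf'_le _ (Finset.mem_univ p))
      have hri : r ip ≤ ∑ i, r i := Finset.single_le_sum (fun i _ => hr i) (Finset.mem_univ ip)
      have hpos : 0 < s - r ip := by linarith
      have hvp : s - r ip ≤ (dotp (b p) (ξ ip) + d p - dotp (a p) x) / nb p := by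
        rcases le_max_iff.mp hle with h | h
        · exact h
        · linarith
      have hqe : q p = dotp (b p) (ξ ip) := by rw [hq]; exact hip
      rw [ge_iff_le, hqe]
      have hle2 : s - ∑ i, r i ≤ s - r ip := by linarith
      linarith
end
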